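/- arXiv:1105.4839 — 7 statements merged into one kernel-verified Lean document; each statement's English description precedes it below -/
import Mathlib

section
/- For 1 < p < ∞, the operator norm of U(s,r,s) on ℓ_p satisfies (|r|^p + 2|s|^p)^{1/p} ≤ ‖U(s,r,s)‖. -/
open scoped ENNReal

/-- The tridiagonal operator U(s,r,s) acting on sequences, with x_{-1} = 0. -/
noncomputable def Ufun (s r : ℂ) (x : ℕ → ℂ) : ℕ → ℂ :=
  fun k => (if k = 0 then 0 else s * x (k - 1)) + r * x k + s * x (k + 1)

/-! Testing `U(s,r,s)` on the unit vector `e₁` gives `(s, r, s, 0, 0, …)`, whose `ℓ_p` norm is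
`(|r|^p + 2|s|^p)^{1/p}`. -/

theorem lp.norm_eq_sum_rpow_of_support_subset {α : Type*} {E : α → Type*}
    [∀ i, NormedAddCommGroup (E i)] {p : ℝ≥0∞} (hp : 0 < p.toReal) (f : lp E p)
    {s : Finset α} (hf : ∀ i ∉ s, f i = 0) :
    ‖f‖ = (∑ i ∈ s, ‖f i‖ ^ p.toReal) ^ (1 / p.toReal) := by
  rw [lp.norm_eq_tsum_rpow hp, tsum_eq_sum]
  intro i hi
  simp [hf i hi, Real.zero_rpow hp.ne']

theorem Ufun_single_one (s r : ℂ) :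
    Ufun s r (Pi.single 1 1) =
      fun k => if k = 0 then s else if k = 1 then r else if k = 2 then s else 0 := by
  funext k
  match k with
  | 0 | 1 | 2 | _ + 3 => simp [Ufun]

/-- Lower bound for the operator norm of U(s,r,s) on ℓ_p:
any bound C for the operator satisfies (|r|^p + 2|s|^p)^{1/p} ≤ C. -/
theorem stmt1 (s r : ℂ) (p : ℝ≥0∞) (hp : 1 < p) (hp' : p ≠ ∞) (C : ℝ)
    (hC : ∀ x : lp (fun _ : ℕ => ℂ) p,
      ∃ h : Memℓp (Ufun s r ↑x) p,
        ‖(⟨Ufun s r ↑x, h⟩ : lp (fun _ : ℕ => ℂ) p)‖ ≤ C * ‖x‖) :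
    (‖r‖ ^ p.toReal + 2 * ‖s‖ ^ p.toReal) ^ (1 / p.toReal) ≤ C := by
  have hp₀ : 0 < p.toReal := ENNReal.toReal_pos (zero_lt_one.trans hp).ne' hp'
  obtain ⟨_, hle⟩ := hC (lp.single p 1 1)
  rw [lp.norm_single (zero_lt_one.trans hp), norm_one, mul_one,
    lp.norm_eq_sum_rpow_of_support_subset hp₀ _ (s := {0, 1, 2})] at hle
  · convert hle using 2
    simp [lp.coeFn_single, Ufun_single_one, two_mul, add_left_comm]
  · intro k hk
    simp only [Finset.mem_insert, Finset.mem_singleton, not_or] at hk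
    simp [lp.coeFn_single, Ufun_single_one, hk.1, hk.2.1, hk.2.2]
end

section
/- The point spectrum of U(s,r,s) on ℓ_p is empty, i.e., U(s,r,s) has no eigenvalues on ℓ_p for 1 < p < ∞ when s ≠ 0. -/
/-!
Write `c = λ - r`. An eigenvector satisfies the three-term recurrence
`s x₁ = c x₀`, `s x_{k+2} + s x_k = c x_{k+1}`, along which the quadratic form
`s x_{k+1}² + s x_k² - c x_k x_{k+1}` is conserved, hence equal to `s x₀²`.
For `p < ∞` an `ℓ_p` sequence tends to `0`, so the conserved quantity is `0`,
which gives `x₀ = 0`; as `s ≠ 0`, the recurrence then propagates the zero to all of `x`.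
-/

open scoped ENNReal
open Filter Topology

theorem Memℓp.tendsto_cofinite_zero {α E : Type*} [NormedAddCommGroup E] {p : ℝ≥0∞}
    {f : α → E} (hf : Memℓp f p) (hp : p ≠ ∞) : Tendsto f cofinite (𝓝 0) := by
  rcases p.trichotomy with rfl | rfl | hp0
  · refine tendsto_const_nhds.congr' ?_
    filter_upwards [hf.finite_dsupport.compl_mem_cofinite] with i hi
    exact (not_not.mp hi).symm
  · exact absurd rfl hp
  · rw [tendsto_zero_iff_norm_tendsto_zero]
    have hpow := ((hf.summable hp0).tendsto_cofinite_zero.rpow_const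
      (Or.inr (inv_nonneg.mpr hp0.le)) : Tendsto _ _ (𝓝 ((0 : ℝ) ^ p.toReal⁻¹)))
    rw [Real.zero_rpow (inv_ne_zero hp0.ne')] at hpow
    exact hpow.congr fun i => Real.rpow_rpow_inv (norm_nonneg _) hp0.ne'

section ThreeTermRecurrence

variable {R : Type*} [CommRing R] {s c : R} {f : ℕ → R}

theorem recurrence_invariant (h0 : s * f 1 = c * f 0)
    (hrec : ∀ k, s * f (k + 2) + s * f k = c * f (k + 1)) (k : ℕ) :
    s * f (k + 1) ^ 2 + s * f k ^ 2 - c * f k * f (k + 1) = s * f 0 ^ 2 := by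
  induction k with
  | zero => linear_combination f 1 * h0
  | succ n ih => linear_combination ih + (f (n + 2) - f n) * hrec n

theorem recurrence_eq_zero [NoZeroDivisors R] (hs : s ≠ 0) (h0 : s * f 1 = c * f 0)
    (hrec : ∀ k, s * f (k + 2) + s * f k = c * f (k + 1)) (hf0 : f 0 = 0) : f = 0 := by
  have hpair : ∀ k, f k = 0 ∧ f (k + 1) = 0 := by
    intro k
    induction k with
    | zero =>
      rw [hf0, mul_zero] at h0
      exact ⟨hf0, (mul_eq_zero.mp h0).resolve_left hs⟩
    | succ n ih =>
      have h := hrec n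
      rw [ih.1, ih.2, mul_zero, mul_zero, add_zero] at h
      exact ⟨ih.2, (mul_eq_zero.mp h).resolve_left hs⟩
  exact funext fun k => (hpair k).1

theorem recurrence_eq_zero_of_tendsto {K : Type*} [Field K] [TopologicalSpace K]
    [IsTopologicalRing K] [T2Space K] {s c : K} {f : ℕ → K} (hs : s ≠ 0)
    (h0 : s * f 1 = c * f 0) (hrec : ∀ k, s * f (k + 2) + s * f k = c * f (k + 1))
    (hf : Tendsto f atTop (𝓝 0)) : f = 0 := by
  have hf1 : Tendsto (fun k => f (k + 1)) atTop (𝓝 0) := hf.comp (tendsto_add_atTop_nat 1)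
  have hinv : Tendsto (fun k => s * f (k + 1) ^ 2 + s * f k ^ 2 - c * f k * f (k + 1))
      atTop (𝓝 0) := by
    simpa using (((hf1.pow 2).const_mul s).add ((hf.pow 2).const_mul s)).sub
      ((hf.const_mul c).mul hf1)
  simp only [recurrence_invariant h0 hrec] at hinv
  have hf0 : s * f 0 ^ 2 = 0 := tendsto_nhds_unique tendsto_const_nhds hinv
  exact recurrence_eq_zero hs h0 hrec (pow_eq_zero_iff two_ne_zero |>.mp
    ((mul_eq_zero.mp hf0).resolve_left hs))

end ThreeTermRecurrence

theorem recurrence_of_Ufun_eq {s r lam : ℂ} {f : ℕ → ℂ} (hf : ∀ k, Ufun s r f k = lam * f k) :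
    s * f 1 = (lam - r) * f 0 ∧ ∀ k, s * f (k + 2) + s * f k = (lam - r) * f (k + 1) := by
  refine ⟨?_, fun k => ?_⟩
  · have h := hf 0
    simp only [Ufun, if_true, zero_add] at h
    linear_combination h
  · have h := hf (k + 1)
    simp only [Ufun, Nat.add_sub_cancel, if_neg (Nat.succ_ne_zero k)] at h
    linear_combination h

theorem stmt2_general (s r : ℂ) (hs : s ≠ 0) (p : ℝ≥0∞) (hp' : p ≠ ∞)
    (lam : ℂ) (x : lp (fun _ : ℕ => ℂ) p)
    (hx : ∀ k, Ufun s r ↑x k = lam * x k) : x = 0 := by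
  have hlim : Tendsto (⇑x) atTop (𝓝 0) :=
    Nat.cofinite_eq_atTop ▸ (lp.memℓp x).tendsto_cofinite_zero hp'
  obtain ⟨h0, hrec⟩ := recurrence_of_Ufun_eq hx
  ext k
  exact congrFun (recurrence_eq_zero_of_tendsto hs h0 hrec hlim) k

/-- The point spectrum of U(s,r,s) on ℓ_p is empty: no eigenvalues. -/
theorem stmt2 (s r : ℂ) (hs : s ≠ 0) (p : ℝ≥0∞) (hp : 1 < p) (hp' : p ≠ ∞)
    (lam : ℂ) (x : lp (fun _ : ℕ => ℂ) p)
    (hx : ∀ k, Ufun s r ↑x k = lam * x k) : x = 0 :=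
  stmt2_general s r hs p hp' lam x hx
end

section
/- For λ outside the segment [r − 2s, r + 2s], the roots α₁, α₂ of s·x² + (r − λ)x + s = 0 satisfy |α₁| < 1 < |α₂| (after suitable labeling); in particular neither root has modulus 1. -/
/-!
Dividing the equation by `α₁` gives `λ = r + (α₁ + α₁⁻¹) s`. On the unit circle `α₁⁻¹ = conj α₁`,
so `α₁ + α₁⁻¹ = 2 Re α₁` is a real number in `[-2, 2]`, which would put `λ` on the excluded
segment. Hence `‖α₁‖ ≠ 1`, and since `‖α₁‖ ‖α₂‖ = 1` the two moduli lie on either side of `1`.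
-/

open Set

lemma eq_add_add_inv_mul_of_quadratic_eq_zero {K : Type*} [Field K] {r s lam a : K} (ha : a ≠ 0)
    (h : s * a ^ 2 + (r - lam) * a + s = 0) : lam = r + (a + a⁻¹) * s := by
  field_simp
  linear_combination -h

lemma Complex.exists_add_inv_eq_ofReal_of_norm_eq_one {a : ℂ} (ha : ‖a‖ = 1) :
    ∃ t ∈ Icc (-2 : ℝ) 2, a + a⁻¹ = t := by
  refine ⟨2 * a.re, ?_, by rw [inv_eq_conj ha, add_conj]⟩
  have hre := abs_le.mp (ha ▸ abs_re_le_norm a)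
  constructor <;> linarith [hre.1, hre.2]

lemma norm_lt_one_and_one_lt_norm_of_mul_eq_one {K : Type*} [NormedDivisionRing K] {a b : K}
    (hab : a * b = 1) (ha : ‖a‖ ≠ 1) :
    ((‖a‖ < 1 ∧ 1 < ‖b‖) ∨ (‖b‖ < 1 ∧ 1 < ‖a‖)) ∧ ‖b‖ ≠ 1 := by
  have hnorm : ‖a‖ * ‖b‖ = 1 := by rw [← norm_mul, hab, norm_one]
  have hb : ‖b‖ ≠ 1 := fun hb => ha (by simpa [hb] using hnorm)
  have ha₀ : 0 ≤ ‖a‖ := norm_nonneg a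
  refine ⟨?_, hb⟩
  rcases ha.lt_or_gt with h | h
  · exact Or.inl ⟨h, by nlinarith⟩
  · exact Or.inr ⟨by nlinarith, h⟩

theorem stmt7_general (r s lam α₁ α₂ : ℂ)
    (hlam : lam ∉ {l : ℂ | ∃ t ∈ Icc (-2 : ℝ) 2, l = r + t * s})
    (h₁ : s * α₁ ^ 2 + (r - lam) * α₁ + s = 0)
    (hprod : α₁ * α₂ = 1) :
    ((‖α₁‖ < 1 ∧ 1 < ‖α₂‖) ∨ (‖α₂‖ < 1 ∧ 1 < ‖α₁‖)) ∧
      ‖α₁‖ ≠ 1 ∧ ‖α₂‖ ≠ 1 := by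
  have hlam_eq := eq_add_add_inv_mul_of_quadratic_eq_zero (left_ne_zero_of_mul_eq_one hprod) h₁
  have hα₁ : ‖α₁‖ ≠ 1 := by
    intro hα₁
    obtain ⟨t, ht, hsum⟩ := Complex.exists_add_inv_eq_ofReal_of_norm_eq_one hα₁
    exact hlam ⟨t, ht, hsum ▸ hlam_eq⟩
  obtain ⟨hsplit, hα₂⟩ := norm_lt_one_and_one_lt_norm_of_mul_eq_one hprod hα₁
  exact ⟨hsplit, hα₁, hα₂⟩

/-- For λ outside the segment [r − 2s, r + 2s] the roots of
s x² + (r − λ) x + s have moduli on either side of 1; neither has modulus 1. -/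
theorem stmt7 (r s lam α₁ α₂ : ℂ) (hs : s ≠ 0)
    (hlam : lam ∉ {l : ℂ | ∃ t ∈ Icc (-2 : ℝ) 2, l = r + t * s})
    (h₁ : s * α₁ ^ 2 + (r - lam) * α₁ + s = 0)
    (h₂ : s * α₂ ^ 2 + (r - lam) * α₂ + s = 0)
    (hprod : α₁ * α₂ = 1) :
    ((‖α₁‖ < 1 ∧ 1 < ‖α₂‖) ∨ (‖α₂‖ < 1 ∧ 1 < ‖α₁‖)) ∧
      ‖α₁‖ ≠ 1 ∧ ‖α₂‖ ≠ 1 :=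
  stmt7_general r s lam α₁ α₂ hlam h₁ hprod
end

section
/- For λ = r (and s ≠ 0), the operator U(s,0,s) − 0 = U(s,r,s) − rI on ℓ_p is injective but not surjective; in particular r belongs to the spectrum of U(s,r,s) on ℓ_p. -/
open scoped ENNReal
open Real Set

/-!
Away from the first coordinate, `(U(s,r,s) - r) x = 0` is the recurrence `x (k + 2) = - x k`.
Its solutions have a `2`-periodic modulus, so the only one in `ℓ_p`, `p < ∞`, is `0`. This gives
injectivity, and it also shows that the unit vector `e₀` is not in the range, since a preimage
would satisfy the recurrence as well.
-/

theorem Memℓp.eq_zero_of_antiperiodic {E : Type*} [NormedAddCommGroup E] {f : ℕ → E}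
    {p : ℝ≥0∞} (hf : Memℓp f p) (hp : 0 < p.toReal) {c : ℕ} (hc : c ≠ 0)
    (hfc : Function.Antiperiodic f c) : f = 0 := by
  funext a
  have hper : Function.Periodic (fun k => ‖f k‖ ^ p.toReal) c := fun k => by
    simp only [hfc k, norm_neg]
  have hinj : Function.Injective fun n : ℕ => a + n * c := fun m n h => by
    simpa [hc] using h
  have hsum := (hf.summable hp).comp_injective hinj
  have hconst : ∀ n : ℕ, ‖f (a + n * c)‖ ^ p.toReal = ‖f a‖ ^ p.toReal := fun n =>
    hper.nat_mul n a
  simp only [Function.comp_def, hconst, summable_const_iff] at hsum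
  simpa [Real.rpow_eq_zero (norm_nonneg _) hp.ne'] using hsum

theorem ContinuousLinearMap.mem_spectrum_of_not_surjective {𝕜 E : Type*}
    [NontriviallyNormedField 𝕜] [NormedAddCommGroup E] [NormedSpace 𝕜 E] {T : E →L[𝕜] E}
    {r : 𝕜} (h : ¬ Function.Surjective ⇑(T - r • 1)) : r ∈ spectrum 𝕜 T := by
  rw [spectrum.mem_iff, Algebra.algebraMap_eq_smul_one, ← IsUnit.neg_iff, neg_sub]
  rintro ⟨u, hu⟩
  exact h fun y => ⟨u.inv y, by rw [← hu]; exact congr($(u.val_inv) y)⟩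

theorem Ufun_add_one (s r : ℂ) (x : ℕ → ℂ) (k : ℕ) :
    Ufun s r x (k + 1) = s * x k + r * x (k + 1) + s * x (k + 2) := by
  simp [Ufun]

theorem antiperiodic_of_Ufun_add_one {s r : ℂ} (hs : s ≠ 0) {x : ℕ → ℂ}
    (h : ∀ k, Ufun s r x (k + 1) = r * x (k + 1)) : Function.Antiperiodic x 2 := fun k => by
  have hk := h k
  rw [Ufun_add_one] at hk
  exact mul_left_cancel₀ hs (by linear_combination hk)

theorem stmt9_general (r s : ℂ) (hs : s ≠ 0) (p : ℝ≥0∞) (hp' : p ≠ ∞) [Fact (1 ≤ p)]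
    (T : lp (fun _ : ℕ => ℂ) p →L[ℂ] lp (fun _ : ℕ => ℂ) p)
    (hT : ∀ (x : lp (fun _ : ℕ => ℂ) p) (k : ℕ), T x k = Ufun s r ↑x k) :
    Function.Injective ⇑(T - r • 1) ∧ ¬ Function.Surjective ⇑(T - r • 1) ∧
      r ∈ spectrum ℂ T := by
  have hp0 : 0 < p.toReal :=
    ENNReal.toReal_pos (zero_lt_one.trans_le Fact.out).ne' hp'
  have hV : ∀ x k, (T - r • 1) x k = Ufun s r x k - r * x k := fun x k => by
    rw [← hT]; rfl
  have hker : ∀ x, (∀ k, (T - r • 1) x (k + 1) = 0) → x = 0 := fun x hx =>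
    lp.ext <| (lp.memℓp x).eq_zero_of_antiperiodic hp0 two_ne_zero <|
      antiperiodic_of_Ufun_add_one hs fun k => sub_eq_zero.mp ((hV x _).symm.trans (hx k))
  have hinj : Function.Injective ⇑(T - r • 1) :=
    (injective_iff_map_eq_zero _).2 fun x hx => hker x fun k => by rw [hx]; rfl
  have hns : ¬ Function.Surjective ⇑(T - r • 1) := fun hsurj => by
    obtain ⟨x, hx⟩ := hsurj (lp.single p 0 1)
    have hx0 := hker x fun k => by rw [hx]; exact lp.single_apply_ne p 0 _ k.succ_ne_zero
    have hx_zero := congr($hx 0)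
    simp [hx0] at hx_zero
  exact ⟨hinj, hns, ContinuousLinearMap.mem_spectrum_of_not_surjective hns⟩

/-- U(s,r,s) − r I is injective but not surjective on ℓ_p;
in particular r belongs to the spectrum of U(s,r,s). -/
theorem stmt9 (r s : ℂ) (hs : s ≠ 0) (p : ℝ≥0∞) (hp : 1 < p) (hp' : p ≠ ∞) [Fact (1 ≤ p)]
    (T : lp (fun _ : ℕ => ℂ) p →L[ℂ] lp (fun _ : ℕ => ℂ) p)
    (hT : ∀ (x : lp (fun _ : ℕ => ℂ) p) (k : ℕ), T x k = Ufun s r ↑x k) :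
    Function.Injective ⇑(T - r • 1) ∧ ¬ Function.Surjective ⇑(T - r • 1) ∧
      r ∈ spectrum ℂ T :=
  stmt9_general r s hs p hp' T hT
end

section
/- For λ ∉ [r − 2s, r + 2s], let α₁ be the root of s·x² + (r−λ)x + s with |α₁| < 1. Then the matrix T = (t_{kn}) with t_{kn} = α₁^{|k−n|+1} − α₁^{|k−n|+3} (i.e., t_{kn} = α₁^{k+1−n} − α₁^{k+3−n} for k ≥ n and t_{kn} = α₁^{n+1−k} − α₁^{n+3−k} for k < n), scaled by 1/(s(α₁² − 1)), defines a bounded linear operator on ℓ_1. -/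
open Set

/-- The resolvent matrix t_{kn} = α₁^{|k−n|+1} − α₁^{|k−n|+3}, scaled by
1/(s(α₁² − 1)), has uniformly bounded column ℓ_1-norms, hence defines a
bounded operator on ℓ_1. -/
theorem stmt10 (r s lam α₁ : ℂ) (hs : s ≠ 0)
    (hlam : lam ∉ {l : ℂ | ∃ t ∈ Icc (-2 : ℝ) 2, l = r + t * s})
    (hroot : s * α₁ ^ 2 + (r - lam) * α₁ + s = 0) (hα : ‖α₁‖ < 1) :
    ∃ C : ℝ, ∀ n : ℕ,
      Summable (fun k : ℕ =>
        ‖(1 / (s * (α₁ ^ 2 - 1))) *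
          (α₁ ^ (((k : ℤ) - n).natAbs + 1) - α₁ ^ (((k : ℤ) - n).natAbs + 3))‖) ∧
      (∑' k : ℕ,
        ‖(1 / (s * (α₁ ^ 2 - 1))) *
          (α₁ ^ (((k : ℤ) - n).natAbs + 1) - α₁ ^ (((k : ℤ) - n).natAbs + 3))‖) ≤ C := by
  set a : ℝ := ‖α₁‖ with ha_def
  have ha0 : 0 ≤ a := norm_nonneg _
  have ha1 : a < 1 := hα
  set c : ℂ := 1 / (s * (α₁ ^ 2 - 1)) with hc_def
  have hgeo : Summable (fun k : ℕ => a ^ k) := summable_geometric_of_lt_one ha0 ha1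
  -- summability of the comparison series
  have hg : ∀ n : ℕ, Summable (fun k : ℕ => a ^ ((k : ℤ) - n).natAbs) := by
    intro n
    rw [← summable_nat_add_iff n]
    have heq : ∀ m : ℕ, (((m + n : ℕ) : ℤ) - n).natAbs = m := by
      intro m; omega
    simpa only [heq] using hgeo
  -- bound on the tsum of the comparison series
  have htsum : ∀ n : ℕ, (∑' k : ℕ, a ^ ((k : ℤ) - n).natAbs) ≤ 2 / (1 - a) := by
    intro n
    have hsplit := Summable.sum_add_tsum_nat_add (f := fun k : ℕ => a ^ ((k : ℤ) - n).natAbs) n (hg n)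
    rw [← hsplit]
    have htail : (∑' k : ℕ, a ^ (((k + n : ℕ) : ℤ) - n).natAbs) = (1 - a)⁻¹ := by
      have heq : ∀ m : ℕ, (((m + n : ℕ) : ℤ) - n).natAbs = m := by intro m; omega
      simp only [heq]
      exact tsum_geometric_of_lt_one ha0 ha1
    have hhead : (∑ k ∈ Finset.range n, a ^ (((k : ℕ) : ℤ) - n).natAbs) ≤ (1 - a)⁻¹ := by
      have h1 : (∑ k ∈ Finset.range n, a ^ (((k : ℕ) : ℤ) - n).natAbs)
          = ∑ j ∈ Finset.range n, a ^ (j + 1) := by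
        have := Finset.sum_range_reflect (fun j => a ^ (j + 1)) n
        rw [← this]
        apply Finset.sum_congr rfl
        intro k hk
        have hkn : k < n := Finset.mem_range.mp hk
        congr 1
        omega
      rw [h1]
      calc (∑ j ∈ Finset.range n, a ^ (j + 1))
          ≤ ∑ j ∈ Finset.range n, a ^ j := by
            apply Finset.sum_le_sum
            intro j _
            exact pow_le_pow_of_le_one ha0 ha1.le (Nat.le_succ j)
        _ ≤ ∑' j : ℕ, a ^ j := Summable.sum_le_tsum _ (fun j _ => pow_nonneg ha0 j) hgeo
        _ = (1 - a)⁻¹ := tsum_geometric_of_lt_one ha0 ha1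
    rw [htail]
    have h2 : (2 : ℝ) / (1 - a) = (1 - a)⁻¹ + (1 - a)⁻¹ := by ring
    rw [h2]
    exact add_le_add hhead le_rfl
  -- termwise bound
  have hbound : ∀ n k : ℕ,
      ‖c * (α₁ ^ (((k : ℤ) - n).natAbs + 1) - α₁ ^ (((k : ℤ) - n).natAbs + 3))‖
        ≤ ‖c‖ * 2 * a ^ ((k : ℤ) - n).natAbs := by
    intro n k
    set m : ℕ := ((k : ℤ) - n).natAbs
    have h1 : ‖α₁ ^ (m + 1) - α₁ ^ (m + 3)‖ ≤ a ^ (m + 1) + a ^ (m + 3) := by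
      calc ‖α₁ ^ (m + 1) - α₁ ^ (m + 3)‖
          ≤ ‖α₁ ^ (m + 1)‖ + ‖α₁ ^ (m + 3)‖ := norm_sub_le _ _
        _ = a ^ (m + 1) + a ^ (m + 3) := by rw [norm_pow, norm_pow]
    have h2 : a ^ (m + 1) ≤ a ^ m := pow_le_pow_of_le_one ha0 ha1.le (Nat.le_succ m)
    have h3 : a ^ (m + 3) ≤ a ^ m := pow_le_pow_of_le_one ha0 ha1.le (by omega)
    calc ‖c * (α₁ ^ (m + 1) - α₁ ^ (m + 3))‖
        = ‖c‖ * ‖α₁ ^ (m + 1) - α₁ ^ (m + 3)‖ := norm_mul _ _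
      _ ≤ ‖c‖ * (a ^ (m + 1) + a ^ (m + 3)) := by
          exact mul_le_mul_of_nonneg_left h1 (norm_nonneg _)
      _ ≤ ‖c‖ * (a ^ m + a ^ m) := by
          apply mul_le_mul_of_nonneg_left _ (norm_nonneg _)
          exact add_le_add h2 h3
      _ = ‖c‖ * 2 * a ^ m := by ring
  refine ⟨‖c‖ * 2 * (2 / (1 - a)), fun n => ?_⟩
  have hgs : Summable (fun k : ℕ => ‖c‖ * 2 * a ^ ((k : ℤ) - n).natAbs) :=
    (hg n).mul_left _
  have hsum : Summable (fun k : ℕ =>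
      ‖c * (α₁ ^ (((k : ℤ) - n).natAbs + 1) - α₁ ^ (((k : ℤ) - n).natAbs + 3))‖) :=
    Summable.of_nonneg_of_le (fun k => norm_nonneg _) (hbound n) hgs
  refine ⟨hsum, ?_⟩
  calc (∑' k : ℕ,
        ‖c * (α₁ ^ (((k : ℤ) - n).natAbs + 1) - α₁ ^ (((k : ℤ) - n).natAbs + 3))‖)
      ≤ ∑' k : ℕ, ‖c‖ * 2 * a ^ ((k : ℤ) - n).natAbs :=
        Summable.tsum_le_tsum (hbound n) hsum hgs
    _ = ‖c‖ * 2 * ∑' k : ℕ, a ^ ((k : ℤ) - n).natAbs := tsum_mul_left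
    _ ≤ ‖c‖ * 2 * (2 / (1 - a)) := by
        apply mul_le_mul_of_nonneg_left (htsum n)
        positivity
end

section
/- U(s,r,s) maps bv_p into bv_p and is bounded with ‖U(s,r,s)x‖_{bv_p} ≤ (2|s| + |r|)·‖x‖_{bv_p} for all x ∈ bv_p, 1 < p < ∞. -/
open scoped ENNReal
open Real Set

/-- The backward difference (Δ x)_k = x_k − x_{k−1}, with x_{-1} = 0. -/
noncomputable def dL (x : ℕ → ℂ) : ℕ → ℂ :=
  fun k => x k - (if k = 0 then 0 else x (k - 1))

lemma dL_Ufun_key (s r : ℂ) (x : ℕ → ℂ) (k : ℕ) :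
    dL (Ufun s r x) k = s * dL x (k - 1) + r * dL x k + s * dL x (k + 1) := by
  match k with
  | 0 => simp [dL, Ufun]; ring
  | 1 => simp [dL, Ufun]; ring
  | (n+2) =>
    simp [dL, Ufun, show n + 2 - 1 = n + 1 from rfl, show n + 1 - 1 = n from rfl]
    ring

lemma concave2 {q A B : ℝ} (hq : 1 ≤ q) (hA : 0 ≤ A) (hB : 0 ≤ B) :
    A ^ (1/q) + B ^ (1/q) ≤ 2 * ((A + B) / 2) ^ (1/q) := by
  have hq0 : q ≠ 0 := by positivity
  lift A to NNReal using hA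
  lift B to NNReal using hB
  have h := NNReal.rpow_arith_mean_le_arith_mean2_rpow (1/2) (1/2)
      (A ^ (1/q)) (B ^ (1/q)) (add_halves 1) hq
  rw [show (1:ℝ)/q = q⁻¹ from one_div q] at h ⊢
  rw [NNReal.rpow_inv_rpow hq0, NNReal.rpow_inv_rpow hq0] at h
  have h2 := NNReal.rpow_le_rpow h (le_of_lt (by positivity : (0:ℝ) < q⁻¹))
  rw [NNReal.rpow_rpow_inv hq0] at h2
  have h3 : (A:ℝ) ^ q⁻¹ / 2 + (B:ℝ) ^ q⁻¹ / 2 ≤ (((A:ℝ) + B) / 2) ^ q⁻¹ := by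
    have := (NNReal.coe_le_coe).2 h2
    push_cast at this
    convert this using 2 <;> ring
  nlinarith [h3]

set_option maxHeartbeats 1000000 in
/-- U(s,r,s) maps bv_p into bv_p with ‖U x‖_{bv_p} ≤ (2|s| + |r|) ‖x‖_{bv_p}. -/
theorem stmt14 (s r : ℂ) (p : ℝ≥0∞) (hp : 1 < p) (hp' : p ≠ ∞)
    (x : ℕ → ℂ) (hx : Memℓp (dL x) p) :
    ∃ h : Memℓp (dL (Ufun s r x)) p,
      ‖(⟨dL (Ufun s r x), h⟩ : lp (fun _ : ℕ => ℂ) p)‖ ≤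
        (2 * ‖s‖ + ‖r‖) * ‖(⟨dL x, hx⟩ : lp (fun _ : ℕ => ℂ) p)‖ := by
  haveI : Fact (1 ≤ p) := ⟨hp.le⟩
  have hq1 : 1 < p.toReal := by
    have := ENNReal.toReal_strict_mono hp' hp
    simpa using this
  set q := p.toReal with hqdef
  have hq0 : 0 < q := lt_trans one_pos hq1
  have ha : Summable (fun k => ‖dL x k‖ ^ q) := hx.summable hq0
  have hy1s : Summable (fun k : ℕ => ‖dL x (k - 1)‖ ^ q) := by
    rw [← summable_nat_add_iff 1]
    simpa using ha
  have hy3s : Summable (fun k : ℕ => ‖dL x (k + 1)‖ ^ q) := (summable_nat_add_iff 1).2 ha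
  have h1 : Memℓp (fun k : ℕ => dL x (k - 1)) p := memℓp_gen hy1s
  have h3 : Memℓp (fun k : ℕ => dL x (k + 1)) p := memℓp_gen hy3s
  have hid : dL (Ufun s r x)
      = s • (fun k : ℕ => dL x (k - 1)) + r • dL x + s • (fun k : ℕ => dL x (k + 1)) := by
    funext k
    simpa [Pi.smul_apply, smul_eq_mul] using dL_Ufun_key s r x k
  have h : Memℓp (dL (Ufun s r x)) p := by
    rw [hid]
    exact ((h1.const_smul s).add (hx.const_smul r)).add (h3.const_smul s)
  refine ⟨h, ?_⟩
  set F : lp (fun _ : ℕ => ℂ) p := ⟨dL x, hx⟩ with hF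
  set Y1 : lp (fun _ : ℕ => ℂ) p := ⟨fun k : ℕ => dL x (k - 1), h1⟩ with hY1
  set Y3 : lp (fun _ : ℕ => ℂ) p := ⟨fun k : ℕ => dL x (k + 1), h3⟩ with hY3
  have heq : (⟨dL (Ufun s r x), h⟩ : lp (fun _ : ℕ => ℂ) p) = s • Y1 + r • F + s • Y3 := by
    apply Subtype.ext
    have : ⇑(s • Y1 + r • F + s • Y3) = s • ⇑Y1 + r • ⇑F + s • ⇑Y3 := by
      rw [lp.coeFn_add, lp.coeFn_add, lp.coeFn_smul, lp.coeFn_smul, lp.coeFn_smul]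
    exact hid.trans this.symm
  -- tsum bookkeeping
  set S : ℝ := ∑' k, ‖dL x k‖ ^ q with hSdef
  have hT1 : (∑' k : ℕ, ‖dL x (k - 1)‖ ^ q) = ‖dL x 0‖ ^ q + S := by
    rw [Summable.tsum_eq_zero_add hy1s]
    simp [hSdef]
  have hT3 : S = ‖dL x 0‖ ^ q + ∑' k : ℕ, ‖dL x (k + 1)‖ ^ q := by
    rw [hSdef, Summable.tsum_eq_zero_add ha]
  have hT3nn : 0 ≤ ∑' k : ℕ, ‖dL x (k + 1)‖ ^ q :=
    tsum_nonneg (fun k => by positivity)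
  have hnF : ‖F‖ = S ^ (1/q) := by
    rw [lp.norm_eq_tsum_rpow hq0]
  have hnY1 : ‖Y1‖ = (‖dL x 0‖ ^ q + S) ^ (1/q) := by
    rw [lp.norm_eq_tsum_rpow hq0, ← hT1]
  have hnY3 : ‖Y3‖ = (S - ‖dL x 0‖ ^ q) ^ (1/q) := by
    rw [lp.norm_eq_tsum_rpow hq0]
    have : (∑' k : ℕ, ‖dL x (k + 1)‖ ^ q) = S - ‖dL x 0‖ ^ q := by
      rw [hT3]; ring
    rw [← this]
  have hkey : ‖Y1‖ + ‖Y3‖ ≤ 2 * ‖F‖ := by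
    rw [hnY1, hnY3, hnF]
    have hA : (0:ℝ) ≤ ‖dL x 0‖ ^ q + S := by
      have : (0:ℝ) ≤ ‖dL x 0‖ ^ q := by positivity
      have hS0 : (0:ℝ) ≤ S := by rw [hT3]; positivity
      linarith
    have hB : (0:ℝ) ≤ S - ‖dL x 0‖ ^ q := by
      rw [hT3]; simpa using hT3nn
    have := concave2 hq1.le hA hB
    have harg : ((‖dL x 0‖ ^ q + S) + (S - ‖dL x 0‖ ^ q)) / 2 = S := by ring
    rwa [harg] at this
  rw [heq]
  have hnorm3 : ‖s • Y1 + r • F + s • Y3‖ ≤ ‖s‖ * ‖Y1‖ + ‖r‖ * ‖F‖ + ‖s‖ * ‖Y3‖ := by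
    calc ‖s • Y1 + r • F + s • Y3‖ ≤ ‖s • Y1 + r • F‖ + ‖s • Y3‖ := norm_add_le _ _
      _ ≤ ‖s • Y1‖ + ‖r • F‖ + ‖s • Y3‖ := by
          have := norm_add_le (s • Y1) (r • F); linarith
      _ = ‖s‖ * ‖Y1‖ + ‖r‖ * ‖F‖ + ‖s‖ * ‖Y3‖ := by rw [norm_smul, norm_smul, norm_smul]
  have hFnn : (0:ℝ) ≤ ‖F‖ := norm_nonneg _
  nlinarith [hnorm3, hkey, norm_nonneg s, norm_nonneg r]
end

section
/- The sequences b^{(k)} defined by b^{(k)}_n = 0 for n < k and b^{(k)}_n = 1 for n ≥ k form a Schauder basis of bv_p for 1 < p < ∞: every x ∈ bv_p has the unique representation x = Σ_k λ_k b^{(k)} with λ_k = x_k − x_{k−1} (x_{−1} := 0). -/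
/-!
The backward difference `dL` identifies `bv_p` isometrically with `ℓ^p` and sends `b^{(k)}` to the
unit vector `e_k`. So it suffices that the unit vectors form a Schauder basis of `ℓ^p` for `p < ∞`:
the partial sums `∑_{k<N} f_k e_k` converge to `f`, and the coefficients are unique because each
coordinate functional is bounded by the norm.
-/

open scoped ENNReal
open Real Set

open Filter Topology Finset

lemma dL_sub (f g : ℕ → ℂ) : dL (fun m => f m - g m) = dL f - dL g := by
  funext n; simp only [dL, Pi.sub_apply]; split_ifs <;> ring

lemma dL_finset_sum {ι : Type*} (s : Finset ι) (f : ι → ℕ → ℂ) :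
    dL (fun m => ∑ k ∈ s, f k m) = ∑ k ∈ s, dL (f k) := by
  funext n; simp only [dL, Finset.sum_apply]; split_ifs <;> simp [Finset.sum_sub_distrib]

lemma dL_const_mul_step (a : ℂ) (k : ℕ) :
    dL (fun n => a * if n < k then 0 else 1) = Pi.single k a := by
  funext n
  rcases lt_trichotomy n k with h | rfl | h
  · simp [dL, h, Pi.single_eq_of_ne h.ne, show n - 1 < k by omega]
  · cases n <;> simp [dL]
  · simp [dL, h.not_gt, Pi.single_eq_of_ne h.ne', show ¬ n - 1 < k by omega, show n ≠ 0 by omega]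

lemma dL_sub_sum_mul_step (x c : ℕ → ℂ) (N n : ℕ) :
    dL (fun m => x m - ∑ k ∈ range N, c k * if m < k then 0 else 1) n
      = dL x n - if n < N then c n else 0 := by
  simp only [dL_sub, dL_finset_sum, dL_const_mul_step, Pi.sub_apply, Finset.sum_apply,
    Finset.sum_pi_single, Finset.mem_range]

namespace lp

variable {E : ℕ → Type*} [∀ i, NormedAddCommGroup (E i)] {p : ℝ≥0∞}

lemma sub_sum_range_single_apply (f : lp E p) (c : ∀ i, E i) (N k : ℕ) :
    (f - ∑ i ∈ range N, lp.single p i (c i) : lp E p) k = f k - if k < N then c k else 0 := by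
  rw [lp.coeFn_sub, lp.coeFn_sum]
  simp only [lp.coeFn_single, Pi.sub_apply]
  rw [Finset.sum_apply, Finset.sum_pi_single]
  simp only [Finset.mem_range]

lemma tendsto_norm_sub_sum_range_single [Fact (1 ≤ p)] (hp : p ≠ ∞) (f : lp E p) :
    Tendsto (fun N => ‖f - ∑ k ∈ range N, lp.single p k (f k)‖) atTop (𝓝 0) := by
  have := (lp.hasSum_single hp f).tendsto_sum_nat
  simpa [norm_sub_rev] using (tendsto_iff_norm_sub_tendsto_zero.1 this)

lemma eq_of_tendsto_norm_sub_sum_range_single (hp : p ≠ 0) (f : lp E p) (c : ∀ i, E i)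
    (hc : Tendsto (fun N => ‖f - ∑ k ∈ range N, lp.single p k (c k)‖) atTop (𝓝 0)) (k : ℕ) :
    c k = f k := by
  have hle : ∀ N, k < N → ‖f k - c k‖ ≤ ‖f - ∑ i ∈ range N, lp.single p i (c i)‖ := by
    intro N hN
    simpa [sub_sum_range_single_apply, hN] using
      lp.norm_apply_le_norm hp (f - ∑ i ∈ range N, lp.single p i (c i)) k
  have : ‖f k - c k‖ ≤ 0 :=
    ge_of_tendsto hc ((eventually_gt_atTop k).mono hle)
  exact (sub_eq_zero.1 (norm_le_zero_iff.1 this)).symm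

end lp

lemma tsum_norm_dL_rpow_eq_norm_lp {p : ℝ≥0∞} (hp : 0 < p.toReal) (x c : ℕ → ℂ)
    (hx : Memℓp (dL x) p) (N : ℕ) :
    (∑' n, ‖dL (fun m => x m - ∑ k ∈ range N, c k * if m < k then 0 else 1) n‖ ^ p.toReal)
        ^ (1 / p.toReal)
      = ‖(⟨dL x, hx⟩ : lp (fun _ : ℕ => ℂ) p) - ∑ k ∈ range N, lp.single p k (c k)‖ := by
  simp only [lp.norm_eq_tsum_rpow hp, dL_sub_sum_mul_step, lp.sub_sum_range_single_apply]

/-- The sequences b^{(k)} (0 before index k, 1 from k on) form a Schauder basis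
of bv_p: with λ_k = x_k − x_{k−1}, the partial sums of Σ λ_k b^{(k)} converge
to x in the bv_p norm, and the representation is unique. -/
theorem stmt15 (p : ℝ≥0∞) (hp : 1 < p) (hp' : p ≠ ∞)
    (b : ℕ → ℕ → ℂ) (hb : ∀ k n, b k n = if n < k then 0 else 1)
    (x : ℕ → ℂ) (hx : Memℓp (dL x) p) :
    Filter.Tendsto
      (fun N => (∑' n, ‖dL (fun m => x m -
          ∑ k ∈ Finset.range N, dL x k * b k m) n‖ ^ p.toReal) ^ (1 / p.toReal))
      Filter.atTop (nhds 0) ∧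
    ∀ c : ℕ → ℂ,
      Filter.Tendsto
        (fun N => (∑' n, ‖dL (fun m => x m -
            ∑ k ∈ Finset.range N, c k * b k m) n‖ ^ p.toReal) ^ (1 / p.toReal))
        Filter.atTop (nhds 0) →
      ∀ k, c k = dL x k := by
  have : Fact (1 ≤ p) := ⟨hp.le⟩
  have hp₀ : p ≠ 0 := (zero_lt_one.trans hp).ne'
  obtain rfl : b = fun k n => if n < k then 0 else 1 := funext₂ hb
  simp only [tsum_norm_dL_rpow_eq_norm_lp (ENNReal.toReal_pos hp₀ hp') x _ hx]
  exact ⟨lp.tendsto_norm_sub_sum_range_single hp' _,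
    fun c hc => lp.eq_of_tendsto_norm_sub_sum_range_single hp₀ _ c hc⟩
end
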